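/- arXiv:1310.7257 — 4 statements merged into one kernel-verified Lean document; each statement's English description precedes it below -/
import Mathlib

section
/- If μ = μ₁ × μ₂ is a product of Borel probability measures on ℝ^{n₁} × ℝ^{n₂}, then for β = (β₁, β₂) ∈ ℕ^{n₁} × ℕ^{n₂} with moments of order |β| finite, p_β^μ(x₁, x₂) = p_{β₁}^{μ₁}(x₁) · p_{β₂}^{μ₂}(x₂). -/
/-!
The product family `q_β(x₁, x₂) = p_{β₁}(x₁) p_{β₂}(x₂)` satisfies the Segal recursion, since
`∂/∂x_j` for `j` in one block only hits the factor in that block, and by Fubini its mean is the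
product of the means of the factors, one of which vanishes when `|β| > 0`. Segal families are
unique: by induction on `|β|`, two of them differ at `β` by a polynomial with vanishing gradient,
i.e. a constant, and comparing means (the moment hypothesis makes the polynomials integrable)
shows that this constant is zero.
-/

open MeasureTheory MvPolynomial

noncomputable section

def mdeg {ι : Type*} [Fintype ι] (β : ι →₀ ℕ) : ℕ := ∑ i, β i

def IsSegalFamily {ι : Type*} [Fintype ι] [DecidableEq ι]
    (μ : Measure (ι → ℝ)) (N : ℕ∞)
    (p : (ι →₀ ℕ) → MvPolynomial ι ℝ) : Prop :=
  p 0 = 1 ∧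
  (∀ β : ι →₀ ℕ, (mdeg β : ℕ∞) < N → ∀ j : ι,
      pderiv j (p β) = (β j : ℝ) • p (β - Finsupp.single j 1)) ∧
  (∀ β : ι →₀ ℕ, 0 < mdeg β → (mdeg β : ℕ∞) < N → ∫ x, eval x (p β) ∂μ = 0)

def HasMoments {ι : Type*} [Fintype ι] (μ : Measure (ι → ℝ)) (N : ℕ∞) : Prop :=
  ∀ k : ℕ, (k : ℕ∞) < N → Integrable (fun x : ι → ℝ => (∑ i, |x i|) ^ k) μ

namespace Finsupp

theorem degree_tsub_single_add_one {σ : Type*} {m : σ →₀ ℕ} {j : σ} (hj : m j ≠ 0) :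
    (m - single j 1).degree + 1 = m.degree := by
  conv_rhs => rw [← tsub_add_cancel_of_le (single_le_iff.mpr (Nat.one_le_iff_ne_zero.mpr hj))]
  rw [map_add, degree_single]

variable {ι κ : Type*} [DecidableEq ι] [DecidableEq κ]

theorem sumElim_tsub_single_inl (β₁ : ι →₀ ℕ) (β₂ : κ →₀ ℕ) (i : ι) :
    sumElim β₁ β₂ - single (Sum.inl i) 1 = sumElim (β₁ - single i 1) β₂ := by
  ext (j | j) <;> simp [single_apply]

theorem sumElim_tsub_single_inr (β₁ : ι →₀ ℕ) (β₂ : κ →₀ ℕ) (i : κ) :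
    sumElim β₁ β₂ - single (Sum.inr i) 1 = sumElim β₁ (β₂ - single i 1) := by
  ext (j | j) <;> simp [single_apply]

end Finsupp

namespace MvPolynomial

variable {σ R : Type*} [CommSemiring R]

theorem pderiv_rename_of_notMem_range {τ : Type*} {f : σ → τ} {i : τ} (hi : i ∉ Set.range f)
    (P : MvPolynomial σ R) : pderiv i (rename f P) = 0 := by
  classical
  refine pderiv_eq_zero_of_notMem_vars fun hmem => hi ?_
  obtain ⟨j, -, rfl⟩ := mem_vars_rename f P hmem
  exact ⟨j, rfl⟩

variable [NoZeroDivisors R] [CharZero R]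

theorem tsub_single_mem_support_pderiv {P : MvPolynomial σ R} {m : σ →₀ ℕ}
    (hm : m ∈ P.support) {j : σ} (hj : m j ≠ 0) :
    m - Finsupp.single j 1 ∈ (pderiv j P).support := by
  rw [mem_support_iff, coeff_pderiv,
    tsub_add_cancel_of_le (Finsupp.single_le_iff.mpr (Nat.one_le_iff_ne_zero.mpr hj))]
  exact mul_ne_zero (mem_support_iff.mp hm) (Nat.cast_add_one_ne_zero _)

theorem totalDegree_le_succ_of_forall_pderiv {P : MvPolynomial σ R} {d : ℕ}
    (h : ∀ j, (pderiv j P).totalDegree ≤ d) : P.totalDegree ≤ d + 1 := by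
  refine Finset.sup_le fun m hm => ?_
  change m.degree ≤ d + 1
  obtain rfl | ⟨j, hj⟩ := eq_or_ne m 0 |>.imp id Finsupp.ne_iff.mp
  · simp
  · rw [← Finsupp.degree_tsub_single_add_one hj]
    exact Nat.succ_le_succ ((le_totalDegree (tsub_single_mem_support_pderiv hm hj)).trans (h j))

theorem eq_C_of_forall_pderiv_eq_zero {P : MvPolynomial σ R} (h : ∀ j, pderiv j P = 0) :
    P = C (coeff 0 P) := by
  refine totalDegree_eq_zero_iff_eq_C.mp (Nat.le_zero.mp (Finset.sup_le fun m hm => ?_))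
  by_contra hm0
  obtain ⟨j, hj⟩ := Finsupp.ne_iff.mp (show m ≠ 0 by rintro rfl; simp at hm0)
  simpa [h j] using tsub_single_mem_support_pderiv hm hj

end MvPolynomial

section Mdeg

variable {ι : Type*} [Fintype ι]

theorem mdeg_eq_degree (β : ι →₀ ℕ) : mdeg β = β.degree :=
  (Finsupp.degree_eq_sum β).symm

theorem mdeg_eq_zero_iff (β : ι →₀ ℕ) : mdeg β = 0 ↔ β = 0 := by
  rw [mdeg_eq_degree, Finsupp.degree_eq_zero_iff]

theorem mdeg_tsub_single_add_one {β : ι →₀ ℕ} {j : ι} (hj : β j ≠ 0) :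
    mdeg (β - Finsupp.single j 1) + 1 = mdeg β := by
  simpa only [mdeg_eq_degree] using Finsupp.degree_tsub_single_add_one hj

theorem mdeg_tsub_single_lt_of_lt {β : ι →₀ ℕ} {N : ℕ∞} (hβ : (mdeg β : ℕ∞) < N) (j : ι) :
    (mdeg (β - Finsupp.single j 1) : ℕ∞) < N := by
  refine lt_of_le_of_lt ?_ hβ
  simpa only [mdeg_eq_degree, Nat.cast_le] using Finsupp.degree_mono tsub_le_self

theorem mdeg_sumElim {κ : Type*} [Fintype κ] (β₁ : ι →₀ ℕ) (β₂ : κ →₀ ℕ) :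
    mdeg (Finsupp.sumElim β₁ β₂) = mdeg β₁ + mdeg β₂ :=
  Fintype.sum_sum_type _

theorem abs_prod_pow_le (x : ι → ℝ) (d : ι →₀ ℕ) :
    |∏ i, x i ^ d i| ≤ (∑ i, |x i|) ^ mdeg d := by
  rw [mdeg, ← Finset.prod_pow_eq_pow_sum, Finset.abs_prod]
  gcongr with i
  rw [abs_pow]
  gcongr
  exact Finset.single_le_sum (fun i _ => abs_nonneg (x i)) (Finset.mem_univ i)

theorem integrable_eval_of_totalDegree_lt {μ : Measure (ι → ℝ)} {N : ℕ∞} (hmom : HasMoments μ N)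
    {P : MvPolynomial ι ℝ} (hP : (P.totalDegree : ℕ∞) < N) :
    Integrable (fun x => eval x P) μ := by
  simp_rw [eval_eq']
  refine integrable_finsetSum _ fun d hd => Integrable.const_mul ?_ _
  have hdeg : mdeg d ≤ P.totalDegree := by
    rw [mdeg_eq_degree]
    exact le_totalDegree hd
  refine (hmom _ (lt_of_le_of_lt (by exact_mod_cast hdeg) hP)).mono'
    (Continuous.aestronglyMeasurable (by fun_prop)) (ae_of_all _ fun x => ?_)
  exact (Real.norm_eq_abs _).trans_le (abs_prod_pow_le x d)

end Mdeg

theorem MvPolynomial.eq_of_forall_pderiv_eq_of_integral_eq {σ : Type*} {μ : Measure (σ → ℝ)}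
    [IsProbabilityMeasure μ] {P Q : MvPolynomial σ ℝ} (hd : ∀ j, pderiv j P = pderiv j Q)
    (hQ : Integrable (fun x => eval x Q) μ)
    (hint : ∫ x, eval x P ∂μ = ∫ x, eval x Q ∂μ) : P = Q := by
  have hC := eq_C_of_forall_pderiv_eq_zero (P := P - Q) fun j => by rw [map_sub, hd, sub_self]
  set c := coeff 0 (P - Q)
  have hP : P = Q + C c := by rw [← hC, add_sub_cancel]
  have hc : c = 0 := by
    simpa [hP, integral_add hQ (integrable_const c)] using hint
  rw [hP, hc, C_0, add_zero]

namespace IsSegalFamily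

variable {ι : Type*} [Fintype ι] [DecidableEq ι] {μ : Measure (ι → ℝ)} {N : ℕ∞}
  {p q : (ι →₀ ℕ) → MvPolynomial ι ℝ} {β : ι →₀ ℕ}

theorem totalDegree_le (hp : IsSegalFamily μ N p) (hβ : (mdeg β : ℕ∞) < N) :
    (p β).totalDegree ≤ mdeg β := by
  induction hn : mdeg β using Nat.strong_induction_on generalizing β with
  | _ n ih =>
    rcases n with _ | k
    · simp [(mdeg_eq_zero_iff β).mp hn, hp.1]
    refine totalDegree_le_succ_of_forall_pderiv fun j => ?_
    rw [hp.2.1 β hβ j]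
    by_cases hj : β j = 0
    · simp [hj]
    have hdeg := mdeg_tsub_single_add_one hj
    calc _ ≤ (p (β - Finsupp.single j 1)).totalDegree := totalDegree_smul_le _ _
      _ ≤ mdeg (β - Finsupp.single j 1) := ih _ (by omega) (mdeg_tsub_single_lt_of_lt hβ j) rfl
      _ = k := by omega

theorem unique [IsProbabilityMeasure μ] (hmom : HasMoments μ N) (hp : IsSegalFamily μ N p)
    (hq : IsSegalFamily μ N q) (hβ : (mdeg β : ℕ∞) < N) : p β = q β := by
  induction hn : mdeg β using Nat.strong_induction_on generalizing β with
  | _ n ih =>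
    rcases n with _ | k
    · simp [(mdeg_eq_zero_iff β).mp hn, hp.1, hq.1]
    have hq_int : Integrable (fun x => eval x (q β)) μ :=
      integrable_eval_of_totalDegree_lt hmom ((Nat.cast_le.mpr (hq.totalDegree_le hβ)).trans_lt hβ)
    have hpos : 0 < mdeg β := by omega
    refine eq_of_forall_pderiv_eq_of_integral_eq (fun j => ?_) hq_int
      (by rw [hp.2.2 β hpos hβ, hq.2.2 β hpos hβ])
    rw [hp.2.1 β hβ j, hq.2.1 β hβ j]
    by_cases hj : β j = 0
    · simp [hj]
    rw [ih _ (by have := mdeg_tsub_single_add_one hj; omega) (mdeg_tsub_single_lt_of_lt hβ j) rfl]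

end IsSegalFamily

section Product

variable {ι κ : Type*}

theorem measurable_sumArrowEquivProdArrow_symm {α : Type*} [MeasurableSpace α] :
    Measurable (Equiv.sumArrowEquivProdArrow ι κ α).symm :=
  (MeasurableEquiv.sumPiEquivProdPi fun _ : ι ⊕ κ => α).symm.measurable

theorem integral_map_sumArrowEquivProdArrow_symm {α E : Type*} [MeasurableSpace α]
    [NormedAddCommGroup E] [NormedSpace ℝ E] (μ₁ : Measure (ι → α)) (μ₂ : Measure (κ → α))
    (f : (ι ⊕ κ → α) → E) :
    ∫ x, f x ∂(μ₁.prod μ₂).map (Equiv.sumArrowEquivProdArrow ι κ α).symm =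
      ∫ z, f (Sum.elim z.1 z.2) ∂μ₁.prod μ₂ :=
  integral_map_equiv (MeasurableEquiv.sumPiEquivProdPi fun _ : ι ⊕ κ => α).symm f

def prodFamily (p₁ : (ι →₀ ℕ) → MvPolynomial ι ℝ) (p₂ : (κ →₀ ℕ) → MvPolynomial κ ℝ)
    (β : (ι ⊕ κ) →₀ ℕ) : MvPolynomial (ι ⊕ κ) ℝ :=
  rename Sum.inl (p₁ (Finsupp.sumFinsuppEquivProdFinsupp β).1) *
    rename Sum.inr (p₂ (Finsupp.sumFinsuppEquivProdFinsupp β).2)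

@[simp]
theorem prodFamily_sumElim (p₁ : (ι →₀ ℕ) → MvPolynomial ι ℝ)
    (p₂ : (κ →₀ ℕ) → MvPolynomial κ ℝ) (β₁ : ι →₀ ℕ) (β₂ : κ →₀ ℕ) :
    prodFamily p₁ p₂ (Finsupp.sumElim β₁ β₂) = rename Sum.inl (p₁ β₁) * rename Sum.inr (p₂ β₂) := by
  rw [prodFamily, show Finsupp.sumFinsuppEquivProdFinsupp (Finsupp.sumElim β₁ β₂) = (β₁, β₂) from
    Finsupp.sumFinsuppEquivProdFinsupp.apply_symm_apply (β₁, β₂)]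

variable [Fintype ι] [Fintype κ] [DecidableEq ι] [DecidableEq κ]

theorem IsSegalFamily.prod {μ₁ : Measure (ι → ℝ)} {μ₂ : Measure (κ → ℝ)}
    [SFinite μ₁] [SFinite μ₂]
    {N : ℕ∞} {p₁ : (ι →₀ ℕ) → MvPolynomial ι ℝ} {p₂ : (κ →₀ ℕ) → MvPolynomial κ ℝ}
    (hp₁ : IsSegalFamily μ₁ N p₁) (hp₂ : IsSegalFamily μ₂ N p₂) :
    IsSegalFamily ((μ₁.prod μ₂).map (Equiv.sumArrowEquivProdArrow ι κ ℝ).symm) N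
      (prodFamily p₁ p₂) := by
  refine ⟨by simp [← Finsupp.sumElim_zero_zero, hp₁.1, hp₂.1], fun β hβ j => ?_,
    fun β hpos hβ => ?_⟩
  all_goals
    obtain ⟨⟨β₁, β₂⟩, rfl⟩ := Finsupp.sumFinsuppEquivProdFinsupp.symm.surjective β
    simp only [Finsupp.sumFinsuppEquivProdFinsupp_symm_apply, mdeg_sumElim, Nat.cast_add] at *
    have hβ₁ : (mdeg β₁ : ℕ∞) < N := lt_of_le_of_lt le_self_add hβ
    have hβ₂ : (mdeg β₂ : ℕ∞) < N := lt_of_le_of_lt le_add_self hβ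
  · rcases j with i | i
    · rw [prodFamily_sumElim, pderiv_mul, pderiv_rename_of_notMem_range (f := Sum.inr) (by simp),
        mul_zero, add_zero, pderiv_rename Sum.inl_injective, hp₁.2.1 β₁ hβ₁ i, map_smul,
        smul_mul_assoc, Finsupp.sumElim_tsub_single_inl, prodFamily_sumElim, Finsupp.sumElim_inl]
    · rw [prodFamily_sumElim, pderiv_mul, pderiv_rename_of_notMem_range (f := Sum.inl) (by simp),
        zero_mul, zero_add, pderiv_rename Sum.inr_injective, hp₂.2.1 β₂ hβ₂ i, map_smul,
        mul_smul_comm, Finsupp.sumElim_tsub_single_inr, prodFamily_sumElim, Finsupp.sumElim_inr]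
  · rw [integral_map_sumArrowEquivProdArrow_symm]
    simp only [prodFamily_sumElim, map_mul, eval_rename, Sum.elim_comp_inl, Sum.elim_comp_inr]
    rw [integral_prod_mul (fun x => eval x (p₁ β₁)) (fun y => eval y (p₂ β₂))]
    rcases Nat.eq_zero_or_pos (mdeg β₁) with h₁ | h₁
    · rw [hp₂.2.2 β₂ (by omega) hβ₂, mul_zero]
    · rw [hp₁.2.2 β₁ h₁ hβ₁, zero_mul]

end Product

theorem segal_prod {n₁ n₂ : ℕ}
    (μ₁ : Measure (Fin n₁ → ℝ)) (μ₂ : Measure (Fin n₂ → ℝ))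
    [IsProbabilityMeasure μ₁] [IsProbabilityMeasure μ₂] (N : ℕ∞)
    (hmom : HasMoments
      ((μ₁.prod μ₂).map (Equiv.sumArrowEquivProdArrow (Fin n₁) (Fin n₂) ℝ).symm) N)
    (p : ((Fin n₁ ⊕ Fin n₂) →₀ ℕ) → MvPolynomial (Fin n₁ ⊕ Fin n₂) ℝ)
    (p₁ : (Fin n₁ →₀ ℕ) → MvPolynomial (Fin n₁) ℝ)
    (p₂ : (Fin n₂ →₀ ℕ) → MvPolynomial (Fin n₂) ℝ)
    (hp : IsSegalFamily
      ((μ₁.prod μ₂).map (Equiv.sumArrowEquivProdArrow (Fin n₁) (Fin n₂) ℝ).symm) N p)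
    (hp₁ : IsSegalFamily μ₁ N p₁) (hp₂ : IsSegalFamily μ₂ N p₂)
    (β₁ : Fin n₁ →₀ ℕ) (β₂ : Fin n₂ →₀ ℕ)
    (hβ : ((mdeg β₁ + mdeg β₂ : ℕ) : ℕ∞) < N) :
    p (Finsupp.sumElim β₁ β₂) =
      (rename Sum.inl (p₁ β₁)) * (rename Sum.inr (p₂ β₂)) := by
  have := Measure.isProbabilityMeasure_map
    (μ := μ₁.prod μ₂) measurable_sumArrowEquivProdArrow_symm.aemeasurable
  rw [hp.unique hmom (hp₁.prod hp₂) (by rwa [mdeg_sumElim]), prodFamily_sumElim]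
end
end

section
/- Wick scaling invariance: let X = (X₁,…,X_n) be a random vector with finite moments of order ≤ |β|, let c ∈ ℝ^n with c^β = 1, and set Y_i = c_i X_i. Then X^β = Y^β as random variables and :Y^β: = :X^β: almost surely. -/
open MeasureTheory MvPolynomial

noncomputable section

/-! Both `γ ↦ c^γ p_γ(x)` and `γ ↦ pY_γ(c x)` satisfy `∂ⱼ f_γ = cⱼ γⱼ f_{γ - eⱼ}`, equal `1` at
`γ = 0`, and have mean zero under the law of `X` for `γ ≠ 0` (they are integrable because
their degree is at most `|γ|`). By induction on `γ` their difference has vanishing partial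
derivatives, so it is a constant with mean zero, hence zero. At `γ = β` we have `c^β = 1`. -/

namespace Finsupp

variable {σ : Type*}

theorem sub_single_one_lt {γ : σ →₀ ℕ} {j : σ} (hj : γ j ≠ 0) : γ - single j 1 < γ :=
  tsub_le_self.lt_of_ne fun h => by
    have := DFunLike.congr_fun h j
    simp only [coe_tsub, Pi.sub_apply, single_eq_same] at this
    omega

theorem degree_sub_single_one_add {γ : σ →₀ ℕ} {j : σ} (hj : γ j ≠ 0) :
    (γ - single j 1).degree + 1 = γ.degree := by
  simpa [degree_eq_weight_one] using weight_sub_single_add (w := fun _ => 1) hj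

end Finsupp

theorem mdeg_eq_degree_s14 {σ : Type*} [Fintype σ] (γ : σ →₀ ℕ) : mdeg γ = γ.degree :=
  (Finsupp.degree_eq_sum γ).symm

theorem mdeg_mono {σ : Type*} [Fintype σ] : Monotone (mdeg : (σ →₀ ℕ) → ℕ) := fun _ _ h => by
  simpa only [mdeg_eq_degree_s14] using Finsupp.degree_mono h

theorem prod_pow_eq_mul_prod_pow_sub_single {σ M : Type*} [Fintype σ] [CommMonoid M]
    (c : σ → M) {γ : σ →₀ ℕ} {j : σ} (hj : γ j ≠ 0) :
    ∏ i, c i ^ γ i = c j * ∏ i, c i ^ (γ - Finsupp.single j 1 : σ →₀ ℕ) i := by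
  classical
  conv_lhs => rw [← Finsupp.sub_add_single_one_cancel hj]
  simp only [Finsupp.coe_add, Pi.add_apply, pow_add, Finset.prod_mul_distrib, Finsupp.single_apply,
    pow_ite, pow_one, pow_zero, Finset.prod_ite_eq, Finset.mem_univ, if_true, mul_comm]

namespace MvPolynomial

section PDeriv

variable {σ R : Type*} [CommRing R] [IsDomain R] [CharZero R]

theorem sub_single_one_mem_support_pderiv {f : MvPolynomial σ R} {α : σ →₀ ℕ}
    (hα : α ∈ f.support) {i : σ} (hi : α i ≠ 0) :
    α - Finsupp.single i 1 ∈ (pderiv i f).support := by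
  rw [mem_support_iff, coeff_pderiv, Finsupp.sub_add_single_one_cancel hi]
  exact mul_ne_zero (mem_support_iff.mp hα) (Nat.cast_add_one_ne_zero _)

theorem totalDegree_le_of_pderiv {f : MvPolynomial σ R} {d : ℕ}
    (h : ∀ i, ∀ m ∈ (pderiv i f).support, m.degree < d) : f.totalDegree ≤ d := by
  refine Finset.sup_le fun α hα => ?_
  change α.degree ≤ d
  by_cases hα0 : α = 0
  · simp [hα0]
  obtain ⟨i, hi⟩ := Finsupp.ne_iff.mp hα0
  have := h i _ (sub_single_one_mem_support_pderiv hα hi)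
  rw [← Finsupp.degree_sub_single_one_add hi]
  omega

theorem eq_C_of_pderiv_eq_zero {f : MvPolynomial σ R} (h : ∀ i, pderiv i f = 0) :
    f = C (f.coeff 0) :=
  totalDegree_eq_zero_iff_eq_C.mp <| Nat.le_zero.mp <|
    totalDegree_le_of_pderiv fun i m hm => by simp [h i] at hm

end PDeriv

section ScaleVars

variable {σ R : Type*} [CommRing R]

def scaleVars (c : σ → R) : MvPolynomial σ R →ₐ[R] MvPolynomial σ R :=
  bind₁ fun i => C (c i) * X i

theorem eval_scaleVars (c x : σ → R) (f : MvPolynomial σ R) :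
    eval x (scaleVars c f) = eval (fun i => c i * x i) f := by
  unfold scaleVars
  induction f using MvPolynomial.induction_on with
  | C a => simp
  | add f g hf hg => simp [hf, hg]
  | mul_X f i hf => simp [hf]

theorem pderiv_scaleVars (c : σ → R) (j : σ) (f : MvPolynomial σ R) :
    pderiv j (scaleVars c f) = C (c j) * scaleVars c (pderiv j f) := by
  unfold scaleVars
  induction f using MvPolynomial.induction_on with
  | C a => simp
  | add f g hf hg => simp only [map_add, hf, hg, mul_add]
  | mul_X f i hf =>
    rcases eq_or_ne i j with rfl | hij
    · simp only [map_mul, map_add, bind₁_X_right, Derivation.leibniz, pderiv_X_self, smul_eq_mul,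
        mul_one, derivation_C, mul_zero, add_zero, hf]
      ring
    · simp only [map_mul, bind₁_X_right, Derivation.leibniz, pderiv_X_of_ne hij, smul_eq_mul,
        mul_zero, derivation_C, add_zero, hf, zero_add]
      ring

end ScaleVars

end MvPolynomial

section Moments

variable {σ : Type*} [Fintype σ] {μ : Measure (σ → ℝ)} {N : ℕ∞}

theorem HasMoments.integrable_prod_pow (hμ : HasMoments μ N) {d : σ →₀ ℕ}
    (hd : (mdeg d : ℕ∞) < N) : Integrable (fun x => ∏ i, x i ^ d i) μ := by
  have hcont : Continuous fun x : σ → ℝ => ∏ i, x i ^ d i := by fun_prop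
  refine (hμ _ hd).mono' hcont.aestronglyMeasurable (ae_of_all _ fun x => ?_)
  have hs : ∀ i, |x i| ≤ ∑ k, |x k| := fun i =>
    Finset.single_le_sum (fun k _ => abs_nonneg (x k)) (Finset.mem_univ i)
  calc ‖∏ i, x i ^ d i‖ = ∏ i, |x i| ^ d i := by simp
    _ ≤ ∏ i, (∑ k, |x k|) ^ d i := Finset.prod_le_prod (fun i _ => by positivity)
        fun i _ => pow_le_pow_left₀ (abs_nonneg _) (hs i) _
    _ = (∑ k, |x k|) ^ mdeg d := Finset.prod_pow_eq_pow_sum _ _ _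

theorem HasMoments.integrable_eval (hμ : HasMoments μ N) {f : MvPolynomial σ ℝ}
    (hf : (f.totalDegree : ℕ∞) < N) : Integrable (fun x => eval x f) μ := by
  simp_rw [eval_eq']
  refine integrable_finsetSum _ fun d hd => (hμ.integrable_prod_pow ?_).const_mul _
  rw [mdeg_eq_degree_s14]
  exact (Nat.cast_le.mpr (le_totalDegree hd)).trans_lt hf

end Moments

/-- The derivative relation of the monomial family `γ ↦ a^γ x^γ`. -/
def IsAppellFamily {σ R : Type*} [Fintype σ] [CommRing R] (a : σ → R) (N : ℕ∞)
    (f : (σ →₀ ℕ) → MvPolynomial σ R) : Prop :=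
  ∀ γ : σ →₀ ℕ, (mdeg γ : ℕ∞) < N → ∀ j : σ,
    pderiv j (f γ) = (a j * γ j) • f (γ - Finsupp.single j 1)

theorem IsSegalFamily.isAppellFamily {σ : Type*} [Fintype σ] [DecidableEq σ]
    {μ : Measure (σ → ℝ)} {N : ℕ∞} {p : (σ →₀ ℕ) → MvPolynomial σ ℝ}
    (hp : IsSegalFamily μ N p) : IsAppellFamily 1 N p := by
  simpa [IsAppellFamily] using hp.2.1

namespace IsAppellFamily

section Algebra

variable {σ R : Type*} [Fintype σ] [CommRing R] {a : σ → R} {N : ℕ∞}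
  {f g : (σ →₀ ℕ) → MvPolynomial σ R}

theorem sub (hf : IsAppellFamily a N f) (hg : IsAppellFamily a N g) :
    IsAppellFamily a N (f - g) := fun γ hγ j => by
  simp only [Pi.sub_apply, map_sub, hf γ hγ j, hg γ hγ j, smul_sub]

theorem C_prod_pow_mul (hf : IsAppellFamily a N f) (c : σ → R) :
    IsAppellFamily (c * a) N fun γ => C (∏ i, c i ^ γ i) * f γ := fun γ hγ j => by
  rw [pderiv_C_mul, hf γ hγ j]
  rcases eq_or_ne (γ j) 0 with hj | hj
  · simp [hj]
  · simp only [prod_pow_eq_mul_prod_pow_sub_single c hj, smul_eq_C_mul, Pi.mul_apply, C_mul]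
    ring

theorem scaleVars (hf : IsAppellFamily a N f) (c : σ → R) :
    IsAppellFamily (c * a) N fun γ => scaleVars c (f γ) := fun γ hγ j => by
  simp only [pderiv_scaleVars, hf γ hγ j, smul_eq_C_mul, Pi.mul_apply, map_mul, algHom_C,
    algebraMap_eq]
  ring

theorem totalDegree_le [IsDomain R] [CharZero R] (hf : IsAppellFamily a N f) (γ : σ →₀ ℕ) :
    (mdeg γ : ℕ∞) < N → (f γ).totalDegree ≤ mdeg γ := by
  induction γ using WellFoundedLT.induction with
  | _ γ ih =>
  intro hγ
  refine totalDegree_le_of_pderiv fun j m hm => ?_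
  rw [hf γ hγ j] at hm
  have hj : γ j ≠ 0 := fun hj => by simp [hj] at hm
  have hγ' : (mdeg (γ - Finsupp.single j 1) : ℕ∞) < N :=
    (Nat.cast_le.mpr (mdeg_mono tsub_le_self)).trans_lt hγ
  have hm' := (le_totalDegree (support_smul hm)).trans (ih _ (Finsupp.sub_single_one_lt hj) hγ')
  rw [mdeg_eq_degree_s14] at hm'
  rw [mdeg_eq_degree_s14 γ, ← Finsupp.degree_sub_single_one_add hj]
  exact Nat.lt_succ_of_le hm'

end Algebra

variable {σ : Type*} [Fintype σ] {μ : Measure (σ → ℝ)} {a : σ → ℝ} {N : ℕ∞}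
  {f : (σ →₀ ℕ) → MvPolynomial σ ℝ}

theorem integrable_eval (hf : IsAppellFamily a N f) (hμ : HasMoments μ N) {γ : σ →₀ ℕ}
    (hγ : (mdeg γ : ℕ∞) < N) : Integrable (fun x => eval x (f γ)) μ :=
  hμ.integrable_eval ((Nat.cast_le.mpr (hf.totalDegree_le γ hγ)).trans_lt hγ)

theorem eq_zero [IsProbabilityMeasure μ] (hf : IsAppellFamily a N f) (h0 : f 0 = 0)
    (hint : ∀ γ, 0 < mdeg γ → (mdeg γ : ℕ∞) < N → ∫ x, eval x (f γ) ∂μ = 0) (γ : σ →₀ ℕ) :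
    (mdeg γ : ℕ∞) < N → f γ = 0 := by
  induction γ using WellFoundedLT.induction with
  | _ γ ih =>
  intro hγ
  have hconst : f γ = C ((f γ).coeff 0) := eq_C_of_pderiv_eq_zero fun j => by
    rw [hf γ hγ j]
    rcases eq_or_ne (γ j) 0 with hj | hj
    · simp [hj]
    · rw [ih _ (Finsupp.sub_single_one_lt hj)
        ((Nat.cast_le.mpr (mdeg_mono tsub_le_self)).trans_lt hγ), smul_zero]
  rcases (mdeg γ).eq_zero_or_pos with hγ0 | hγ0
  · rw [mdeg_eq_degree_s14, Finsupp.degree_eq_zero_iff] at hγ0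
    rwa [hγ0]
  · have hmean := hint γ hγ0 hγ
    rw [hconst] at hmean
    rw [hconst, C_eq_zero]
    simpa using hmean

end IsAppellFamily

theorem wick_scaling {n : ℕ} {Ω : Type*} [MeasurableSpace Ω]
    (P : Measure Ω) [IsProbabilityMeasure P]
    (X : Ω → Fin n → ℝ) (hX : Measurable X)
    (β : Fin n →₀ ℕ)
    (hmom : ∀ k : ℕ, k ≤ mdeg β → Integrable (fun ω => (∑ i, |X ω i|) ^ k) P)
    (c : Fin n → ℝ) (hc : ∏ i, c i ^ β i = 1)
    (p pY : (Fin n →₀ ℕ) → MvPolynomial (Fin n) ℝ)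
    (hp : IsSegalFamily (P.map X) ((mdeg β + 1 : ℕ) : ℕ∞) p)
    (hpY : IsSegalFamily (P.map (fun ω i => c i * X ω i)) ((mdeg β + 1 : ℕ) : ℕ∞) pY) :
    (∀ ω, ∏ i, (c i * X ω i) ^ β i = ∏ i, X ω i ^ β i) ∧
    (∀ᵐ ω ∂P, eval (fun i => c i * X ω i) (pY β) = eval (X ω) (p β)) := by
  refine ⟨fun ω => by simp only [mul_pow, Finset.prod_mul_distrib, hc, one_mul], ?_⟩
  set μ := P.map X
  have : IsProbabilityMeasure μ := Measure.isProbabilityMeasure_map hX.aemeasurable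
  have hμ : HasMoments μ ((mdeg β + 1 : ℕ) : ℕ∞) := fun k hk => by
    have hcont : Continuous fun x : Fin n → ℝ => (∑ i, |x i|) ^ k := by fun_prop
    exact (integrable_map_measure hcont.aestronglyMeasurable hX.aemeasurable).mpr
      (hmom k (Nat.lt_succ_iff.mp (by exact_mod_cast hk)))
  have hscale : Measurable fun (x : Fin n → ℝ) i => c i * x i :=
    (by fun_prop : Continuous fun (x : Fin n → ℝ) i => c i * x i).measurable
  have hμY : P.map (fun ω i => c i * X ω i) = μ.map (fun x i => c i * x i) :=
    (Measure.map_map hscale hX).symm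
  have hp' := hp.isAppellFamily.C_prod_pow_mul c
  have hr := hpY.isAppellFamily.scaleVars c
  have hmean : ∀ γ, 0 < mdeg γ → (mdeg γ : ℕ∞) < ((mdeg β + 1 : ℕ) : ℕ∞) →
      ∫ x, eval x (C (∏ i, c i ^ γ i) * p γ - scaleVars c (pY γ)) ∂μ = 0 := fun γ hγ hγN => by
    simp only [eval_sub]
    rw [integral_sub (hp'.integrable_eval hμ hγN) (hr.integrable_eval hμ hγN)]
    simp only [eval_mul, eval_C, eval_scaleVars, integral_const_mul, hp.2.2 γ hγ hγN]
    rw [← integral_map hscale.aemeasurable (continuous_eval _).aestronglyMeasurable, ← hμY,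
      hpY.2.2 γ hγ hγN]
    simp
  have hβ := (hp'.sub hr).eq_zero (by simp [hp.1, hpY.1]) hmean β (by norm_cast; omega)
  rw [Pi.sub_apply, hc, map_one, one_mul, sub_eq_zero] at hβ
  exact ae_of_all _ fun ω => by rw [hβ, eval_scaleVars]

end
end

section
/- Robustness of Wick ordering under linear substitution: let X = (X₁,…,X_n) be a random vector with sufficiently many finite moments, T ∈ M_{m×n}(ℝ), Y = TX, and let q, p be real polynomials in n and m variables respectively with q(x) = p(Tx) for all x ∈ ℝ^n. Then :q(X): = :p(Y): almost surely. -/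
/-!
Write `W_μ q = ∑ q_β p_β` for Wick ordering with respect to a Segal family `p` of `μ`. Because
`∂ⱼ p_β = β_j p_{β - e_j}` and `∫ p_β dμ = 0` for `β ≠ 0`, the map `W_μ` commutes with every
`∂ⱼ` and satisfies `∫ W_μ q dμ = q(0)`. A polynomial is determined by its partial derivatives
together with its mean, so by induction on the degree these two properties pin `W_μ` down.
By the chain rule and the change of variables `y = T x`, the polynomial `x ↦ (W_{T_*μ} r)(T x)`
has the same two properties as `W_μ (r ∘ T)`, hence the two coincide. Evaluating at `X`
gives the identity at every `ω`, with `q = pp ∘ T`.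
-/

open MeasureTheory MvPolynomial

noncomputable section

theorem Finsupp.degree_tsub_single_add_one_s17 {σ : Type*} {γ : σ →₀ ℕ} {i : σ} (hi : γ i ≠ 0) :
    (γ - Finsupp.single i 1).degree + 1 = γ.degree := by
  have hle : Finsupp.single i 1 ≤ γ := Finsupp.single_le_iff.mpr (Nat.one_le_iff_ne_zero.mpr hi)
  have h := map_add Finsupp.degree (γ - Finsupp.single i 1) (Finsupp.single i 1)
  rwa [tsub_add_cancel_of_le hle, Finsupp.degree_single, eq_comm] at h

namespace MvPolynomial

variable {σ τ R : Type*}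

theorem totalDegree_pderiv_le [CommSemiring R] (f : MvPolynomial σ R) (i : σ) :
    (pderiv i f).totalDegree ≤ f.totalDegree - 1 := by
  refine Finset.sup_le fun γ hγ => ?_
  have hmem : γ + Finsupp.single i 1 ∈ f.support := by
    rw [mem_support_iff, coeff_pderiv] at hγ
    exact mem_support_iff.mpr (left_ne_zero_of_mul hγ)
  have hdeg := map_add Finsupp.degree γ (Finsupp.single i 1)
  rw [Finsupp.degree_single] at hdeg
  have := le_totalDegree hmem
  change γ.degree ≤ _
  change (γ + Finsupp.single i 1).degree ≤ _ at this
  omega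

theorem totalDegree_le_succ_of_pderiv [CommSemiring R] [NoZeroDivisors R] [CharZero R]
    {f : MvPolynomial σ R} {d : ℕ} (h : ∀ i, (pderiv i f).totalDegree ≤ d) :
    f.totalDegree ≤ d + 1 := by
  refine Finset.sup_le fun γ hγ => ?_
  change γ.degree ≤ d + 1
  rcases eq_or_ne γ 0 with rfl | hγ0
  · simp
  obtain ⟨i, hi⟩ : ∃ i, γ i ≠ 0 := by
    by_contra! h
    exact hγ0 (Finsupp.ext h)
  have hle : Finsupp.single i 1 ≤ γ := Finsupp.single_le_iff.mpr (Nat.one_le_iff_ne_zero.mpr hi)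
  have hmem : γ - Finsupp.single i 1 ∈ (pderiv i f).support := by
    rw [mem_support_iff, coeff_pderiv, tsub_add_cancel_of_le hle]
    exact mul_ne_zero (mem_support_iff.mp hγ) (Nat.cast_add_one_ne_zero _)
  have hdeg := Finsupp.degree_tsub_single_add_one_s17 hi
  have := (le_totalDegree hmem).trans (h i)
  change (γ - Finsupp.single i 1).degree ≤ d at this
  omega

theorem pderiv_ext [CommRing R] [IsAddTorsionFree R] {f g : MvPolynomial σ R}
    (hD : ∀ i, pderiv i f = pderiv i g) (hc : constantCoeff f = constantCoeff g) : f = g := by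
  refine coe_injective σ R (MvPowerSeries.pderiv.ext (fun i => ?_) ?_)
  · rw [MvPowerSeries.pderiv_coe, MvPowerSeries.pderiv_coe, hD]
  · simpa [← MvPowerSeries.coeff_zero_eq_constantCoeff_apply, constantCoeff_eq] using hc

theorem pderiv_bind₁ [CommSemiring R] [Fintype σ] (g : σ → MvPolynomial τ R)
    (r : MvPolynomial σ R) (j : τ) :
    pderiv j (bind₁ g r) = ∑ k, pderiv j (g k) * bind₁ g (pderiv k r) := by
  classical
  induction r using MvPolynomial.induction_on with
  | C a => simp
  | add f f' hf hf' => simp only [map_add, hf, hf', mul_add, Finset.sum_add_distrib]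
  | mul_X f i hf =>
    simp only [map_mul, map_add, bind₁_X_right, pderiv_mul, hf, pderiv_X, Pi.single_apply,
      mul_add, Finset.sum_add_distrib, Finset.sum_mul, apply_ite (bind₁ g), map_zero, mul_ite,
      mul_one, mul_zero, Finset.sum_ite_eq, Finset.mem_univ, if_true]
    simp only [mul_assoc, mul_comm (bind₁ g f)]

theorem totalDegree_bind₁_le [CommSemiring R] {g : σ → MvPolynomial τ R}
    (hg : ∀ k, (g k).totalDegree ≤ 1) (r : MvPolynomial σ R) :
    (bind₁ g r).totalDegree ≤ r.totalDegree := by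
  conv_lhs => rw [r.as_sum]
  rw [map_sum]
  refine totalDegree_finsetSum_le fun β hβ => ?_
  rw [bind₁_monomial]
  refine (totalDegree_mul _ _).trans ?_
  rw [totalDegree_C, zero_add]
  refine (totalDegree_finsetProd _ _).trans ((Finset.sum_le_sum fun i _ => ?_).trans
    (le_totalDegree hβ))
  exact (totalDegree_pow _ _).trans (by simpa using Nat.mul_le_mul_left (β i) (hg i))

end MvPolynomial

section LinearSubstitution

variable {ι κ R : Type*} [CommSemiring R] [Fintype ι]

def linearSubst (T : Matrix κ ι R) : MvPolynomial κ R →ₐ[R] MvPolynomial ι R :=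
  bind₁ fun k => ∑ j, T k j • X j

theorem eval_linearSubst (T : Matrix κ ι R) (x : ι → R) (r : MvPolynomial κ R) :
    eval x (linearSubst T r) = eval (T.mulVec x) r := by
  refine (eval₂Hom_bind₁ _ _ _ r).trans (congrArg (eval · r) (funext fun k => ?_))
  simp [Matrix.mulVec, dotProduct]

theorem totalDegree_linearSubst_le (T : Matrix κ ι R) (r : MvPolynomial κ R) :
    (linearSubst T r).totalDegree ≤ r.totalDegree :=
  totalDegree_bind₁_le (fun k => totalDegree_finsetSum_le fun j _ =>
    (totalDegree_smul_le _ _).trans ((totalDegree_monomial_le _ _).trans (by simp))) r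

theorem pderiv_linearSubst [Fintype κ] (T : Matrix κ ι R) (r : MvPolynomial κ R) (j : ι) :
    pderiv j (linearSubst T r) = ∑ k, T k j • linearSubst T (pderiv k r) := by
  classical
  rw [linearSubst, pderiv_bind₁]
  refine Finset.sum_congr rfl fun k _ => ?_
  simp [pderiv_X, Pi.single_apply, smul_eq_C_mul]

theorem constantCoeff_linearSubst (T : Matrix κ ι R) (r : MvPolynomial κ R) :
    constantCoeff (linearSubst T r) = constantCoeff r := by
  rw [← eval_zero, eval_linearSubst, Matrix.mulVec_zero, eval_zero]

theorem Matrix.continuous_mulVec [TopologicalSpace R] [IsTopologicalSemiring R]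
    (T : Matrix κ ι R) : Continuous T.mulVec :=
  Continuous.matrix_mulVec continuous_const continuous_id

end LinearSubstitution

section WickMap

variable {ι : Type*}

/-- The Wick ordering `q ↦ :q:` attached to the family `p`, extended linearly from
`:x^β: = p β`. -/
def wickMap (p : (ι →₀ ℕ) → MvPolynomial ι ℝ) : MvPolynomial ι ℝ →ₗ[ℝ] MvPolynomial ι ℝ :=
  (basisMonomials ι ℝ).constr ℝ p

theorem wickMap_monomial (p : (ι →₀ ℕ) → MvPolynomial ι ℝ) (β : ι →₀ ℕ) (c : ℝ) :
    wickMap p (monomial β c) = c • p β := by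
  have hβ : monomial β c = c • basisMonomials ι ℝ β := by simp [smul_monomial]
  rw [hβ, map_smul, wickMap, Module.Basis.constr_basis]

theorem eval_wickMap (p : (ι →₀ ℕ) → MvPolynomial ι ℝ) (q : MvPolynomial ι ℝ) (x : ι → ℝ) :
    eval x (wickMap p q) = ∑ β ∈ q.support, q.coeff β * eval x (p β) := by
  conv_lhs => rw [q.as_sum]
  simp only [map_sum, wickMap_monomial, smul_eval]

end WickMap

section Segal

variable {ι : Type*} [Fintype ι]

theorem mdeg_lt_of_mem_support {q : MvPolynomial ι ℝ} {β : ι →₀ ℕ} {N : ℕ∞}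
    (hβ : β ∈ q.support) (hq : (q.totalDegree : ℕ∞) < N) : (mdeg β : ℕ∞) < N :=
  (Nat.cast_le.mpr (mdeg_eq_degree β ▸ le_totalDegree hβ)).trans_lt hq

variable [DecidableEq ι] {μ : Measure (ι → ℝ)} {N : ℕ∞} {p : (ι →₀ ℕ) → MvPolynomial ι ℝ}

theorem IsSegalFamily.totalDegree_le_s17 (hp : IsSegalFamily μ N p) {β : ι →₀ ℕ}
    (hβ : (mdeg β : ℕ∞) < N) : (p β).totalDegree ≤ mdeg β := by
  induction hk : mdeg β generalizing β with
  | zero =>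
    rw [mdeg_eq_degree, Finsupp.degree_eq_zero_iff] at hk
    simp [hk, hp.1]
  | succ k ih =>
    refine totalDegree_le_succ_of_pderiv fun j => ?_
    rw [hp.2.1 β hβ j]
    rcases eq_or_ne (β j) 0 with h0 | h0
    · simp [h0]
    have hk' : mdeg (β - Finsupp.single j 1) = k := by
      have := Finsupp.degree_tsub_single_add_one_s17 h0
      rw [mdeg_eq_degree] at hk ⊢
      omega
    exact (totalDegree_smul_le _ _).trans (ih ((Nat.cast_le.mpr (by omega)).trans_lt hβ) hk')

theorem IsSegalFamily.wickMap_C (hp : IsSegalFamily μ N p) (a : ℝ) : wickMap p (C a) = C a := by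
  conv_lhs => rw [C_apply]
  rw [wickMap_monomial, hp.1, smul_eq_C_mul, mul_one]

theorem IsSegalFamily.pderiv_wickMap (hp : IsSegalFamily μ N p) {q : MvPolynomial ι ℝ}
    (hq : (q.totalDegree : ℕ∞) < N) (j : ι) :
    pderiv j (wickMap p q) = wickMap p (pderiv j q) := by
  conv_lhs => rw [q.as_sum]
  conv_rhs => rw [q.as_sum]
  simp only [map_sum]
  refine Finset.sum_congr rfl fun β hβ => ?_
  rw [wickMap_monomial, pderiv_monomial, wickMap_monomial, Derivation.map_smul,
    hp.2.1 β (mdeg_lt_of_mem_support hβ hq) j, smul_smul]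

theorem IsSegalFamily.totalDegree_wickMap_le (hp : IsSegalFamily μ N p) {q : MvPolynomial ι ℝ}
    (hq : (q.totalDegree : ℕ∞) < N) : (wickMap p q).totalDegree ≤ q.totalDegree := by
  conv_lhs => rw [q.as_sum]
  rw [map_sum]
  refine totalDegree_finsetSum_le fun β hβ => ?_
  rw [wickMap_monomial]
  exact (totalDegree_smul_le _ _).trans ((hp.totalDegree_le_s17 (mdeg_lt_of_mem_support hβ hq)).trans
    (mdeg_eq_degree β ▸ le_totalDegree hβ))

end Segal

section Integration

variable {ι : Type*}

/-- Unlike `HasMoments`, this is inherited by linear images (`PolynomialsIntegrable.map_mulVec`),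
since composing with a linear map does not raise the degree. -/
def PolynomialsIntegrable [Fintype ι] (μ : Measure (ι → ℝ)) (N : ℕ∞) : Prop :=
  ∀ r : MvPolynomial ι ℝ, (r.totalDegree : ℕ∞) < N → Integrable (fun x => eval x r) μ

theorem abs_prod_pow_le_sum_abs_pow_mdeg [Fintype ι] (x : ι → ℝ) (β : ι →₀ ℕ) :
    |∏ i, x i ^ β i| ≤ (∑ i, |x i|) ^ mdeg β := by
  rw [Finset.abs_prod, mdeg, ← Finset.prod_pow_eq_pow_sum]
  gcongr with i
  rw [abs_pow]
  gcongr
  exact Finset.single_le_sum (fun j _ => abs_nonneg (x j)) (Finset.mem_univ i)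

theorem HasMoments.polynomialsIntegrable [Fintype ι] {μ : Measure (ι → ℝ)} {N : ℕ∞}
    (hm : HasMoments μ N) : PolynomialsIntegrable μ N := by
  intro r hr
  simp_rw [eval_eq']
  refine integrable_finsetSum _ fun β hβ => Integrable.const_mul ?_ _
  exact (hm _ (mdeg_lt_of_mem_support hβ hr)).mono'
    (by fun_prop : Continuous fun x : ι → ℝ => ∏ i, x i ^ β i).aestronglyMeasurable
    (ae_of_all _ fun x => abs_prod_pow_le_sum_abs_pow_mdeg x β)

theorem PolynomialsIntegrable.map_mulVec [Fintype ι] {κ : Type*} [Fintype κ]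
    {μ : Measure (ι → ℝ)} {N : ℕ∞} (h : PolynomialsIntegrable μ N) (T : Matrix κ ι ℝ) :
    PolynomialsIntegrable (μ.map T.mulVec) N := by
  intro r hr
  rw [integrable_map_measure (continuous_eval r).aestronglyMeasurable
    T.continuous_mulVec.aemeasurable]
  simpa [Function.comp_def, eval_linearSubst] using
    h (linearSubst T r) ((Nat.cast_le.mpr (totalDegree_linearSubst_le T r)).trans_lt hr)

theorem IsSegalFamily.integral_eval_wickMap [Fintype ι] [DecidableEq ι]
    {μ : Measure (ι → ℝ)} [IsProbabilityMeasure μ] {N : ℕ∞} {p : (ι →₀ ℕ) → MvPolynomial ι ℝ}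
    (hp : IsSegalFamily μ N p) (hint : PolynomialsIntegrable μ N) {q : MvPolynomial ι ℝ}
    (hq : (q.totalDegree : ℕ∞) < N) :
    ∫ x, eval x (wickMap p q) ∂μ = constantCoeff q := by
  have hcentered : ∀ β ∈ q.support, ∫ x, eval x (p β) ∂μ = if β = 0 then 1 else 0 := by
    intro β hβ
    split_ifs with h0
    · simp [h0, hp.1]
    · refine hp.2.2 β ?_ (mdeg_lt_of_mem_support hβ hq)
      rw [mdeg_eq_degree]
      exact Nat.pos_of_ne_zero ((Finsupp.degree_eq_zero_iff β).not.mpr h0)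
  have hdeg : ∀ β ∈ q.support, ((p β).totalDegree : ℕ∞) < N := fun β hβ =>
    (Nat.cast_le.mpr (hp.totalDegree_le_s17 (mdeg_lt_of_mem_support hβ hq))).trans_lt
      (mdeg_lt_of_mem_support hβ hq)
  simp_rw [eval_wickMap]
  rw [integral_finsetSum _ fun β hβ => (hint _ (hdeg β hβ)).const_mul _]
  simp_rw [integral_const_mul]
  rw [Finset.sum_congr rfl fun β hβ => by rw [hcentered β hβ], constantCoeff_eq]
  simp [Finset.sum_ite_eq', mem_support_iff, eq_comm]

theorem eq_of_pderiv_eq_of_integral_eq {μ : Measure (ι → ℝ)} [IsProbabilityMeasure μ]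
    {f g : MvPolynomial ι ℝ} (hD : ∀ i, pderiv i f = pderiv i g)
    (hg : Integrable (fun x => eval x g) μ)
    (hfg : ∫ x, eval x f ∂μ = ∫ x, eval x g ∂μ) : f = g := by
  set c := constantCoeff f - constantCoeff g
  have hf : f = g + C c := pderiv_ext (by simp [hD]) (by simp [c])
  rw [hf] at hfg
  simp only [map_add, eval_C] at hfg
  rw [integral_add hg (integrable_const c), integral_const] at hfg
  simp only [probReal_univ, one_smul] at hfg
  have hc : c = 0 := by linarith
  rw [hf, hc, C_0, add_zero]

end Integration

theorem wickMap_linearSubst {ι κ : Type*} [Fintype ι] [DecidableEq ι] [Fintype κ] [DecidableEq κ]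
    {μ : Measure (ι → ℝ)} [IsProbabilityMeasure μ] {N : ℕ∞} (hint : PolynomialsIntegrable μ N)
    (T : Matrix κ ι ℝ) {pX : (ι →₀ ℕ) → MvPolynomial ι ℝ} {pY : (κ →₀ ℕ) → MvPolynomial κ ℝ}
    (hpX : IsSegalFamily μ N pX) (hpY : IsSegalFamily (μ.map T.mulVec) N pY)
    {r : MvPolynomial κ ℝ} (hr : (r.totalDegree : ℕ∞) < N) :
    wickMap pX (linearSubst T r) = linearSubst T (wickMap pY r) := by
  have : IsProbabilityMeasure (μ.map T.mulVec) :=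
    Measure.isProbabilityMeasure_map T.continuous_mulVec.aemeasurable
  suffices h : ∀ d : ℕ, (d : ℕ∞) < N → ∀ r : MvPolynomial κ ℝ, r.totalDegree ≤ d →
      wickMap pX (linearSubst T r) = linearSubst T (wickMap pY r) from h _ hr r le_rfl
  intro d hdN
  induction d with
  | zero =>
    intro r hrd
    rw [totalDegree_eq_zero_iff_eq_C.mp (Nat.le_zero.mp hrd), hpY.wickMap_C, algHom_C,
      algebraMap_eq, hpX.wickMap_C]
  | succ d ih =>
    intro r hrd
    have hr : (r.totalDegree : ℕ∞) < N := (Nat.cast_le.mpr hrd).trans_lt hdN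
    have hSr : ((linearSubst T r).totalDegree : ℕ∞) < N :=
      (Nat.cast_le.mpr (totalDegree_linearSubst_le T r)).trans_lt hr
    have hSWr : ((linearSubst T (wickMap pY r)).totalDegree : ℕ∞) < N :=
      (Nat.cast_le.mpr ((totalDegree_linearSubst_le T _).trans
        (hpY.totalDegree_wickMap_le hr))).trans_lt hr
    refine eq_of_pderiv_eq_of_integral_eq (μ := μ) (fun j => ?_) (hint _ hSWr) ?_
    · rw [hpX.pderiv_wickMap hSr, pderiv_linearSubst, pderiv_linearSubst, map_sum]
      refine Finset.sum_congr rfl fun k _ => ?_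
      have hk : (pderiv k r).totalDegree ≤ d := (totalDegree_pderiv_le r k).trans (by omega)
      rw [map_smul, ih ((Nat.cast_le.mpr d.le_succ).trans_lt hdN) _ hk, hpY.pderiv_wickMap hr]
    · simp_rw [hpX.integral_eval_wickMap hint hSr, eval_linearSubst]
      rw [← integral_map T.continuous_mulVec.aemeasurable (continuous_eval _).aestronglyMeasurable,
        hpY.integral_eval_wickMap (hint.map_mulVec T) hr, constantCoeff_linearSubst]

theorem wick_linear_substitution_general {n m : ℕ} {Ω : Type*} [MeasurableSpace Ω]
    (P : Measure Ω) [IsProbabilityMeasure P]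
    (X : Ω → Fin n → ℝ) (hX : Measurable X)
    (T : Matrix (Fin m) (Fin n) ℝ)
    (q : MvPolynomial (Fin n) ℝ) (pp : MvPolynomial (Fin m) ℝ)
    (hqp : ∀ x : Fin n → ℝ, eval x q = eval (T.mulVec x) pp)
    (N : ℕ∞)
    (hmom : ∀ k : ℕ, (k : ℕ∞) < N → Integrable (fun ω => (∑ i, |X ω i|) ^ k) P)
    (hdp : (pp.totalDegree : ℕ∞) < N)
    (pX : (Fin n →₀ ℕ) → MvPolynomial (Fin n) ℝ)
    (pY : (Fin m →₀ ℕ) → MvPolynomial (Fin m) ℝ)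
    (hpX : IsSegalFamily (P.map X) N pX)
    (hpY : IsSegalFamily (P.map (fun ω => T.mulVec (X ω))) N pY) :
    ∀ᵐ ω ∂P,
      ∑ β ∈ q.support, q.coeff β * eval (X ω) (pX β) =
      ∑ α ∈ pp.support, pp.coeff α * eval (T.mulVec (X ω)) (pY α) := by
  have : IsProbabilityMeasure (P.map X) := Measure.isProbabilityMeasure_map hX.aemeasurable
  have hint : PolynomialsIntegrable (P.map X) N := HasMoments.polynomialsIntegrable fun k hk => by
    rw [integrable_map_measure
      (by fun_prop : Continuous fun x : Fin n → ℝ => (∑ i, |x i|) ^ k).aestronglyMeasurable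
      hX.aemeasurable]
    exact hmom k hk
  have hmap : P.map (fun ω => T.mulVec (X ω)) = (P.map X).map T.mulVec :=
    (Measure.map_map T.continuous_mulVec.measurable hX).symm
  have hq : q = linearSubst T pp := MvPolynomial.funext fun x => by rw [hqp, eval_linearSubst]
  have key := wickMap_linearSubst hint T hpX (hmap ▸ hpY) hdp
  refine ae_of_all _ fun ω => ?_
  have := congrArg (eval (X ω)) key
  rwa [← hq, eval_wickMap, eval_linearSubst, eval_wickMap] at this

theorem wick_linear_substitution {n m : ℕ} {Ω : Type*} [MeasurableSpace Ω]
    (P : Measure Ω) [IsProbabilityMeasure P]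
    (X : Ω → Fin n → ℝ) (hX : Measurable X)
    (T : Matrix (Fin m) (Fin n) ℝ)
    (q : MvPolynomial (Fin n) ℝ) (pp : MvPolynomial (Fin m) ℝ)
    (hqp : ∀ x : Fin n → ℝ, eval x q = eval (T.mulVec x) pp)
    (N : ℕ∞)
    (hmom : ∀ k : ℕ, (k : ℕ∞) < N → Integrable (fun ω => (∑ i, |X ω i|) ^ k) P)
    (hdq : (q.totalDegree : ℕ∞) < N) (hdp : (pp.totalDegree : ℕ∞) < N)
    (pX : (Fin n →₀ ℕ) → MvPolynomial (Fin n) ℝ)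
    (pY : (Fin m →₀ ℕ) → MvPolynomial (Fin m) ℝ)
    (hpX : IsSegalFamily (P.map X) N pX)
    (hpY : IsSegalFamily (P.map (fun ω => T.mulVec (X ω))) N pY) :
    ∀ᵐ ω ∂P,
      ∑ β ∈ q.support, q.coeff β * eval (X ω) (pX β) =
      ∑ α ∈ pp.support, pp.coeff α * eval (T.mulVec (X ω)) (pY α) :=
  wick_linear_substitution_general P X hX T q pp hqp N hmom hdp pX pY hpX hpY
end
end

section
/- Recursion for transition coefficients: for a matrix T ∈ M_{m×n}(ℝ), multi-indices α ∈ ℕ^m with |α| = N', β ∈ ℕ^n with |β| = N'−1, and 1 ≤ ℓ ≤ n, one has (β_ℓ + 1) A_{α, β+δ_ℓ} = Σ_{k=1}^m α_k T_{k,ℓ} A_{α−δ_k, β}. -/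
/-! Every `Γ` with column sums `β + δ_ℓ` has `β_ℓ + 1 = ∑_k Γ_{kℓ}`, so the left side is
`∑_k ∑_Γ Γ_{kℓ} (α!/Γ!) T^Γ`. For fixed `k` substitute `Γ = Γ' + E_{kℓ}` (the terms with
`Γ_{kℓ} = 0` vanish): then `Γ_{kℓ}/Γ! = 1/Γ'!`, `T^Γ = T_{kℓ} T^{Γ'}` and `α! = α_k (α - δ_k)!`,
while `Γ` has margins `(α, β + δ_ℓ)` exactly when `Γ'` has margins `(α - δ_k, β)`. If `α_k = 0`
no such `Γ` exists, matching the factor `α_k` on the right despite the truncated `α - δ_k`. -/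

open MeasureTheory MvPolynomial

noncomputable section

open scoped Classical in
def transCoeff {m n : ℕ} (T : Matrix (Fin m) (Fin n) ℝ)
    (α : Fin m → ℕ) (β : Fin n → ℕ) : ℝ :=
  ∑ᶠ Γ : Matrix (Fin m) (Fin n) ℕ,
    if (∀ i, ∑ j, Γ i j = α i) ∧ (∀ j, ∑ i, Γ i j = β j) then
      ((∏ i, Nat.factorial (α i) : ℕ) : ℝ) / ((∏ i, ∏ j, Nat.factorial (Γ i j) : ℕ) : ℝ) * ∏ i, ∏ j, T i j ^ Γ i j
    else 0


open Function Finset Nat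

theorem Fintype.prod_eq_mul_prod_of_forall_ne {ι M : Type*} [Fintype ι] [DecidableEq ι]
    [CommMonoid M] {f g : ι → M} (a : ι) (d : M) (hne : ∀ i, i ≠ a → f i = g i)
    (ha : f a = d * g a) : ∏ i, f i = d * ∏ i, g i := by
  rw [Fintype.prod_eq_mul_prod_compl a f, Fintype.prod_eq_mul_prod_compl a g, ha, mul_assoc,
    Finset.prod_congr rfl fun i hi => hne i (by simpa using hi)]

theorem Fintype.prod_prod_eq_mul_prod_prod_of_forall_ne {ι κ M : Type*} [Fintype ι] [Fintype κ]
    [DecidableEq ι] [DecidableEq κ] [CommMonoid M] {f g : ι → κ → M} (a : ι) (b : κ) (d : M)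
    (hne : ∀ i j, ¬(a = i ∧ b = j) → f i j = g i j) (hab : f a b = d * g a b) :
    ∏ i, ∏ j, f i j = d * ∏ i, ∏ j, g i j := by
  simp only [← Fintype.prod_prod_type']
  refine Fintype.prod_eq_mul_prod_of_forall_ne (a, b) d (fun p hp => hne p.1 p.2 ?_) hab
  rintro ⟨rfl, rfl⟩
  exact hp rfl

variable {ι κ : Type*}

namespace Matrix

section Single

variable [DecidableEq ι] [DecidableEq κ]

theorem add_single_apply_of_ne {Γ : Matrix ι κ ℕ} {k i : ι} {ℓ j : κ} (h : ¬(k = i ∧ ℓ = j)) :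
    (Γ + single k ℓ 1 : Matrix ι κ ℕ) i j = Γ i j := by
  simp [single_apply_of_ne _ _ _ _ _ h]

theorem sum_add_single_apply_row [Fintype κ] (Γ : Matrix ι κ ℕ) (k i : ι) (ℓ : κ) :
    ∑ j, (Γ + single k ℓ 1 : Matrix ι κ ℕ) i j = ∑ j, Γ i j + if i = k then 1 else 0 := by
  simp only [add_apply, sum_add_distrib]
  congr 1
  by_cases hi : i = k <;> simp [single, hi, Ne.symm]

theorem sum_add_single_apply_col [Fintype ι] (Γ : Matrix ι κ ℕ) (k : ι) (ℓ j : κ) :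
    ∑ i, (Γ + single k ℓ 1 : Matrix ι κ ℕ) i j = ∑ i, Γ i j + if j = ℓ then 1 else 0 := by
  simp only [add_apply, sum_add_distrib]
  congr 1
  by_cases hj : j = ℓ <;> simp [single, hj, Ne.symm]

theorem finsum_comp_add_single {M : Type*} [AddCommMonoid M] {h : Matrix ι κ ℕ → M} (k : ι)
    (ℓ : κ) (hzero : ∀ Γ : Matrix ι κ ℕ, Γ k ℓ = 0 → h Γ = 0) :
    ∑ᶠ Γ, h (Γ + single k ℓ 1) = ∑ᶠ Γ, h Γ := by
  rw [← finsum_mem_range (f := h) (add_left_injective (single k ℓ 1 : Matrix ι κ ℕ)),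
    ← finsum_mem_univ h]
  refine finsum_mem_inter_support_eq' _ _ _ fun Γ hΓ => iff_of_true ?_ trivial
  refine ⟨Γ - single k ℓ 1, ext fun i j => ?_⟩
  have hkℓ := mt (hzero Γ) hΓ
  by_cases hij : k = i ∧ ℓ = j
  · obtain ⟨rfl, rfl⟩ := hij
    simp only [add_apply, sub_apply, single_apply_same]
    omega
  · simp [single_apply_of_ne _ _ _ _ _ hij]

end Single

variable [Fintype ι] [Fintype κ]

def HasMargins (Γ : Matrix ι κ ℕ) (α : ι → ℕ) (β : κ → ℕ) : Prop :=
  (∀ i, ∑ j, Γ i j = α i) ∧ (∀ j, ∑ i, Γ i j = β j)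

theorem HasMargins.apply_le {Γ : Matrix ι κ ℕ} {α : ι → ℕ} {β : κ → ℕ} (h : HasMargins Γ α β)
    (i : ι) (j : κ) : Γ i j ≤ α i :=
  h.1 i ▸ single_le_sum (fun _ _ => Nat.zero_le _) (mem_univ j)

variable [DecidableEq ι] [DecidableEq κ]

theorem hasMargins_add_single_iff {Γ : Matrix ι κ ℕ} {α : ι → ℕ} {β : κ → ℕ} {k : ι} (ℓ : κ)
    (hk : α k ≠ 0) :
    HasMargins (Γ + single k ℓ 1) α (fun j => β j + if j = ℓ then 1 else 0) ↔
      HasMargins Γ (fun i => α i - if i = k then 1 else 0) β := by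
  simp only [HasMargins, sum_add_single_apply_row, sum_add_single_apply_col, add_left_inj]
  refine and_congr_left' (forall_congr' fun i => ?_)
  rcases eq_or_ne i k with rfl | hi <;> simp only [if_pos, if_neg, *, not_false_eq_true] <;> omega

theorem not_hasMargins_add_single {Γ : Matrix ι κ ℕ} {α : ι → ℕ} {β : κ → ℕ} {k : ι} (ℓ : κ)
    (hk : α k = 0) : ¬HasMargins (Γ + single k ℓ 1) α β := fun h => by
  have hrow := h.1 k
  rw [sum_add_single_apply_row, if_pos rfl, hk] at hrow
  omega

end Matrix

open Matrix

section TransCoeffTerm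

variable [Fintype ι] [Fintype κ]

open scoped Classical in
def transCoeffTerm (T : Matrix ι κ ℝ) (α : ι → ℕ) (β : κ → ℕ) (Γ : Matrix ι κ ℕ) : ℝ :=
  if HasMargins Γ α β then
    ((∏ i, (α i)! : ℕ) : ℝ) / ((∏ i, ∏ j, (Γ i j)! : ℕ) : ℝ) * ∏ i, ∏ j, T i j ^ Γ i j
  else 0

theorem transCoeff_eq_finsum {m n : ℕ} (T : Matrix (Fin m) (Fin n) ℝ) (α : Fin m → ℕ)
    (β : Fin n → ℕ) : transCoeff T α β = ∑ᶠ Γ, transCoeffTerm T α β Γ :=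
  finsum_congr fun _ => by unfold transCoeffTerm HasMargins; congr

theorem transCoeffTerm_support_finite (T : Matrix ι κ ℝ) (α : ι → ℕ) (β : κ → ℕ) :
    (support (transCoeffTerm T α β)).Finite := by
  classical
  refine (Set.finite_Iic (fun i _ => α i : ι → κ → ℕ)).subset fun Γ hΓ => ?_
  have hm : HasMargins Γ α β := by_contra fun h => hΓ (if_neg h)
  exact hm.apply_le

theorem cast_mul_transCoeffTerm (T : Matrix ι κ ℝ) (α : ι → ℕ) (β : κ → ℕ) (Γ : Matrix ι κ ℕ)
    (ℓ : κ) : (β ℓ : ℝ) * transCoeffTerm T α β Γ = ∑ k, (Γ k ℓ : ℝ) * transCoeffTerm T α β Γ := by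
  by_cases h : HasMargins Γ α β
  · rw [← sum_mul, ← Nat.cast_sum, h.2 ℓ]
  · simp [transCoeffTerm, h]

theorem cast_succ_mul_transCoeffTerm_add_single [DecidableEq ι] [DecidableEq κ]
    (T : Matrix ι κ ℝ) (α : ι → ℕ) (β : κ → ℕ) (Γ : Matrix ι κ ℕ) (k : ι) (ℓ : κ) :
    ((Γ k ℓ + 1 : ℕ) : ℝ) *
        transCoeffTerm T α (fun j => β j + if j = ℓ then 1 else 0) (Γ + single k ℓ 1) =
      α k * T k ℓ * transCoeffTerm T (fun i => α i - if i = k then 1 else 0) β Γ := by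
  rcases eq_or_ne (α k) 0 with hk | hk
  · simp [transCoeffTerm, not_hasMargins_add_single ℓ hk, hk]
  have hmargins := hasMargins_add_single_iff (Γ := Γ) (β := β) ℓ hk
  by_cases h : HasMargins Γ (fun i => α i - if i = k then 1 else 0) β
  swap
  · simp [transCoeffTerm, h, hmargins]
  rw [transCoeffTerm, transCoeffTerm, if_pos (hmargins.mpr h), if_pos h]
  have hα : ((∏ i, (α i)! : ℕ) : ℝ) = α k * ((∏ i, (α i - if i = k then 1 else 0)! : ℕ) : ℝ) := by
    push_cast
    refine Fintype.prod_eq_mul_prod_of_forall_ne k _ (fun i hi => by simp [hi]) ?_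
    rw [if_pos rfl]
    exact_mod_cast (Nat.mul_factorial_pred hk).symm
  have hΓ : ((∏ i, ∏ j, ((Γ + single k ℓ 1 : Matrix ι κ ℕ) i j)! : ℕ) : ℝ) =
      (Γ k ℓ + 1 : ℕ) * ((∏ i, ∏ j, (Γ i j)! : ℕ) : ℝ) := by
    push_cast
    refine Fintype.prod_prod_eq_mul_prod_prod_of_forall_ne k ℓ _
      (fun i j hij => by rw [add_single_apply_of_ne hij]) ?_
    simp only [Matrix.add_apply, single_apply_same]
    exact_mod_cast Nat.factorial_succ _
  have hT : ∏ i, ∏ j, T i j ^ (Γ + single k ℓ 1 : Matrix ι κ ℕ) i j =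
      T k ℓ * ∏ i, ∏ j, T i j ^ Γ i j := by
    refine Fintype.prod_prod_eq_mul_prod_prod_of_forall_ne k ℓ _
      (fun i j hij => by rw [add_single_apply_of_ne hij]) ?_
    rw [Matrix.add_apply, single_apply_same, pow_succ, mul_comm]
  rw [hα, hΓ, hT]
  have : ((∏ i, ∏ j, (Γ i j)! : ℕ) : ℝ) ≠ 0 := by positivity
  field_simp

end TransCoeffTerm

theorem transCoeff_recursion_general {m n : ℕ} (T : Matrix (Fin m) (Fin n) ℝ)
    (α : Fin m → ℕ)
    (β : Fin n → ℕ)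
    (ℓ : Fin n) :
    ((β ℓ + 1 : ℕ) : ℝ) *
        transCoeff T α (fun j => β j + if j = ℓ then 1 else 0) =
      ∑ k, (α k : ℝ) * T k ℓ *
        transCoeff T (fun i => α i - if i = k then 1 else 0) β := by
  set β' : Fin n → ℕ := fun j => β j + if j = ℓ then 1 else 0
  have hfin := transCoeffTerm_support_finite T α β'
  calc ((β ℓ + 1 : ℕ) : ℝ) * transCoeff T α β'
      = ∑ᶠ Γ, ∑ k, (Γ k ℓ : ℝ) * transCoeffTerm T α β' Γ := by
        rw [transCoeff_eq_finsum, mul_finsum]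
        refine finsum_congr fun Γ => ?_
        rw [← cast_mul_transCoeffTerm]
        simp [β']
    _ = ∑ k, ∑ᶠ Γ, (Γ k ℓ : ℝ) * transCoeffTerm T α β' Γ :=
        finsum_sum_comm _ _ fun k _ => hfin.subset (support_mul_subset_right _ _)
    _ = ∑ k, ∑ᶠ Γ, ((Γ k ℓ + 1 : ℕ) : ℝ) * transCoeffTerm T α β' (Γ + Matrix.single k ℓ 1) := by
        refine sum_congr rfl fun k _ => ?_
        rw [← finsum_comp_add_single k ℓ (fun Γ hΓ => by simp [hΓ])]
        simp
    _ = ∑ k, (α k : ℝ) * T k ℓ * transCoeff T (fun i => α i - if i = k then 1 else 0) β := by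
        refine sum_congr rfl fun k _ => ?_
        rw [transCoeff_eq_finsum, mul_finsum]
        exact finsum_congr fun Γ => cast_succ_mul_transCoeffTerm_add_single T α β Γ k ℓ

theorem transCoeff_recursion {m n : ℕ} (T : Matrix (Fin m) (Fin n) ℝ)
    (N' : ℕ) (hN' : 0 < N')
    (α : Fin m → ℕ) (hα : ∑ k, α k = N')
    (β : Fin n → ℕ) (hβ : ∑ j, β j = N' - 1)
    (ℓ : Fin n) :
    ((β ℓ + 1 : ℕ) : ℝ) *
        transCoeff T α (fun j => β j + if j = ℓ then 1 else 0) =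
      ∑ k, (α k : ℝ) * T k ℓ *
        transCoeff T (fun i => α i - if i = k then 1 else 0) β :=
  transCoeff_recursion_general T α β ℓ

end
end
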